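/- Let p, t, w ∈ ℂ and φ, l, s ∈ ℝ. Define M = [[−(1/4)p·w + (1/4)p̄·w̄, t·e^{−φ/2}·w + e^{φ/2}·w̄], [e^{φ/2}·w − t̄·e^{−φ/2}·w̄, (1/4)p·w − (1/4)p̄·w̄]] ∈ M₂(ℂ), Λ = diag(e^l, e^{−l}), and H_s = diag(s, −s). Then −det(Λ⁻¹·M·Λ + H_s + Mᴴ) = s² + 4·e^φ·|w|²·cosh²(l) + 4·|t|²·e^{−φ}·|w|²·sinh²(l) − 8·Re(t·w²)·cosh(l)·sinh(l), where Mᴴ is the conjugate transpose of M. -/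

import Mathlib

/-!
For real `a ≠ 0`, conjugating by `Λ = diag(a, a⁻¹)` only rescales off-diagonal entries, and the
diagonal of `M` is purely imaginary, so `X = Λ⁻¹MΛ + H_s + Mᴴ` has diagonal `(s, -s)` and
off-diagonal entries `a⁻¹ z`, `a z̄` with `z = a⁻¹ M₀₁ + a M̄₁₀`; hence `-det X = s² + |z|²`.
For the cosh-Gordon connection and `a = eˡ` one finds
`z = 2 e^{φ/2} cosh l · w̄ - 2 e^{-φ/2} sinh l · t w`, and expanding `|z|²` gives the metric.
-/

open Matrix Complex

/-- The value on a tangent vector w of the cosh-Gordon flat connection at λ = 1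
(P·w + Q·w̄, with p standing for the value of ∂φ). -/
noncomputable def connVal (p t w : ℂ) (φ : ℝ) : Matrix (Fin 2) (Fin 2) ℂ :=
  !![-(1 / 4) * p * w + (1 / 4) * (starRingEnd ℂ) p * (starRingEnd ℂ) w,
       t * (Real.exp (-φ / 2) : ℝ) * w + ((Real.exp (φ / 2) : ℝ) : ℂ) * (starRingEnd ℂ) w;
     ((Real.exp (φ / 2) : ℝ) : ℂ) * w
       - (starRingEnd ℂ) t * (Real.exp (-φ / 2) : ℝ) * (starRingEnd ℂ) w,
       (1 / 4) * p * w - (1 / 4) * (starRingEnd ℂ) p * (starRingEnd ℂ) w]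

open ComplexConjugate

theorem Matrix.inv_diagonal_vec2_inv {K : Type*} [Field K] {a : K} (ha : a ≠ 0) :
    (diagonal ![a, a⁻¹])⁻¹ = diagonal ![a⁻¹, a] := by
  refine inv_eq_left_inv ?_
  rw [diagonal_mul_diagonal, ← diagonal_one]
  congr 1
  ext i
  fin_cases i <;> simp [ha]

theorem Complex.conj_eq_neg_of_re_eq_zero {z : ℂ} (hz : z.re = 0) : conj z = -z := by
  rw [eq_neg_iff_add_eq_zero, add_comm, add_conj, hz]
  simp

theorem neg_det_diagConj_add_diag_add_conjTranspose {M : Matrix (Fin 2) (Fin 2) ℂ}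
    (h₀ : (M 0 0).re = 0) (h₁ : (M 1 1).re = 0) {a : ℝ} (ha : a ≠ 0) (s : ℝ) :
    -(!![(a : ℂ), 0; 0, (a : ℂ)⁻¹]⁻¹ * M * !![(a : ℂ), 0; 0, (a : ℂ)⁻¹]
        + !![(s : ℂ), 0; 0, -(s : ℂ)] + Mᴴ).det
      = ((s ^ 2 + ‖(a : ℂ)⁻¹ * M 0 1 + a * conj (M 1 0)‖ ^ 2 : ℝ) : ℂ) := by
  have ha' : (a : ℂ) ≠ 0 := ofReal_ne_zero.mpr ha
  rw [ofReal_add, ofReal_pow, ofReal_pow, ← mul_conj', ← diagonal_vec2, inv_diagonal_vec2_inv ha',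
    det_fin_two]
  simp only [Matrix.add_apply, mul_diagonal, diagonal_mul, conjTranspose_apply, RCLike.star_def,
    conj_eq_neg_of_re_eq_zero h₀, conj_eq_neg_of_re_eq_zero h₁, map_add, map_mul, map_inv₀,
    conj_ofReal, conj_conj, of_apply, cons_val', cons_val_zero, cons_val_one, cons_val_fin_one]
  field_simp
  ring

theorem Complex.norm_sq_mul_conj_sub_mul (x y : ℝ) (t z : ℂ) :
    ‖x * conj z - y * t * z‖ ^ 2
      = x ^ 2 * ‖z‖ ^ 2 + y ^ 2 * ‖t‖ ^ 2 * ‖z‖ ^ 2 - 2 * x * y * (t * z ^ 2).re := by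
  have hcross : x * conj z * conj (y * t * z) = ((x * y : ℝ) : ℂ) * conj (t * z ^ 2) := by
    simp only [map_mul, map_pow, conj_ofReal, ofReal_mul]
    ring
  simp only [Complex.sq_norm, normSq_sub, hcross, re_ofReal_mul, conj_re, normSq_mul,
    normSq_ofReal, normSq_conj]
  ring

section connVal

variable (p t w : ℂ) (φ : ℝ)

theorem connVal_zero_zero_re : (connVal p t w φ 0 0).re = 0 := by
  simp [connVal]

theorem connVal_one_one_re : (connVal p t w φ 1 1).re = 0 := by
  simp [connVal]

theorem connVal_offDiag_combination (l : ℝ) :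
    ((Real.exp l : ℂ))⁻¹ * connVal p t w φ 0 1 + Real.exp l * conj (connVal p t w φ 1 0)
      = ((2 * Real.exp (φ / 2) * Real.cosh l : ℝ) : ℂ) * conj w
        - ((2 * Real.exp (-φ / 2) * Real.sinh l : ℝ) : ℂ) * t * w := by
  simp only [connVal, of_apply, cons_val', cons_val_zero, cons_val_one, cons_val_fin_one,
    map_sub, map_mul, conj_ofReal, conj_conj, Real.cosh_eq, Real.sinh_eq, Real.exp_neg]
  push_cast
  field_simp
  ring

end connVal

/-- The induced 3-dimensional metric on the tangent vector (w, s) at height l: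
−det(Λ⁻¹MΛ + H_s + Mᴴ) = s² + 4e^φ|w|²cosh²l + 4|t|²e^{−φ}|w|²sinh²l − 8Re(tw²)cosh l sinh l. -/
theorem det_coshGordon_metric
    (p t w : ℂ) (φ l s : ℝ) :
    letI M : Matrix (Fin 2) (Fin 2) ℂ := connVal p t w φ
    letI Λ : Matrix (Fin 2) (Fin 2) ℂ :=
      !![((Real.exp l : ℝ) : ℂ), 0; 0, ((Real.exp (-l) : ℝ) : ℂ)]
    letI Hs : Matrix (Fin 2) (Fin 2) ℂ := !![((s : ℝ) : ℂ), 0; 0, -((s : ℝ) : ℂ)]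
    (-(Λ⁻¹ * M * Λ + Hs + Mᴴ).det
      = Complex.ofReal (s ^ 2 + 4 * Real.exp φ * ‖w‖ ^ 2 * Real.cosh l ^ 2
          + 4 * ‖t‖ ^ 2 * Real.exp (-φ) * ‖w‖ ^ 2 * Real.sinh l ^ 2
          - 8 * (t * w ^ 2).re * Real.cosh l * Real.sinh l)) := by
  rw [Real.exp_neg l, ofReal_inv,
    neg_det_diagConj_add_diag_add_conjTranspose (connVal_zero_zero_re ..) (connVal_one_one_re ..)
      (Real.exp_pos l).ne',
    connVal_offDiag_combination, norm_sq_mul_conj_sub_mul]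
  congr 1
  have hexp_sq : Real.exp (φ / 2) ^ 2 = Real.exp φ := by rw [← Real.exp_nat_mul]; ring_nf
  have hexp_neg_sq : Real.exp (-φ / 2) ^ 2 = Real.exp (-φ) := by rw [← Real.exp_nat_mul]; ring_nf
  have hexp_mul : Real.exp (φ / 2) * Real.exp (-φ / 2) = 1 := by
    rw [← Real.exp_add, neg_div, add_neg_cancel, Real.exp_zero]
  linear_combination (4 * Real.cosh l ^ 2 * ‖w‖ ^ 2) * hexp_sq
    + (4 * Real.sinh l ^ 2 * ‖t‖ ^ 2 * ‖w‖ ^ 2) * hexp_neg_sq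
    - (8 * Real.cosh l * Real.sinh l * (t * w ^ 2).re) * hexp_mul
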